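/- arXiv:1106.2619 — 6 statements merged into one kernel-verified Lean document; each statement's English description precedes it below -/
import Mathlib

section
/- Let Λ ⊆ R^m be a lattice (the set of integer combinations of n linearly independent vectors) and v ∈ Λ a nonzero lattice vector. Let Λ_⊥v = {u_⊥v : u ∈ Λ} be the projection of Λ orthogonal to v. Then for every i ∈ {1,…,n−1}, the i-th successive minimum satisfies λ_i(Λ_⊥v) ≤ λ_{i+1}(Λ). -/
/-!
Take `i + 1` linearly independent lattice vectors of norm at most `λ_{i+1}(Λ)`. The map
`u ↦ u_⊥v` is the orthogonal projection onto `(ℝ v)ᗮ` (also for `v = 0`, where division by zero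
makes it the identity); it does not increase norms and its kernel `ℝ v` has dimension at most one,
so the projected vectors still span a space of dimension at least `i`. Some `i` of them are
therefore linearly independent vectors of `Λ_⊥v` of norm at most `λ_{i+1}(Λ)`.
-/

open scoped RealInnerProductSpace

/-- The `i`-th successive minimum of a set `L`: the infimum of radii `r` such that the
closed ball of radius `r` contains at least `i` linearly independent vectors of `L`. -/
noncomputable def succMin {m : ℕ} (L : Set (EuclideanSpace ℝ (Fin m))) (i : ℕ) : ℝ :=
  sInf {r : ℝ | ∃ s : Fin i → EuclideanSpace ℝ (Fin m),
    (∀ k, s k ∈ L) ∧ LinearIndependent ℝ s ∧ ∀ k, ‖s k‖ ≤ r}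

open Module Submodule

section LinearAlgebra

variable {K V W : Type*} [DivisionRing K] [AddCommGroup V] [Module K V]
  [AddCommGroup W] [Module K W]

theorem exists_linearIndependent_comp_of_le_finrank_span {ι : Type*} [Finite ι] {v : ι → V}
    {n : ℕ} (hn : n ≤ finrank K (span K (Set.range v))) :
    ∃ g : Fin n → ι, LinearIndependent K (v ∘ g) := by
  obtain ⟨κ, a, ha, hspan, hli⟩ := exists_linearIndependent' K v
  have : Finite κ := Finite.of_injective a ha
  have : Fintype κ := Fintype.ofFinite κ
  rw [← hspan, finrank_span_eq_card hli, ← Fintype.card_fin n] at hn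
  obtain ⟨e⟩ := Function.Embedding.nonempty_of_card_le hn
  exact ⟨a ∘ e, hli.comp e e.injective⟩

theorem card_le_finrank_span_range_comp_add_finrank_ker [FiniteDimensional K V]
    {ι : Type*} [Fintype ι] {s : ι → V} (hs : LinearIndependent K s) (f : V →ₗ[K] W) :
    Fintype.card ι ≤ finrank K (span K (Set.range (f ∘ s))) + finrank K (LinearMap.ker f) := by
  set U := span K (Set.range s)
  have hrange : LinearMap.range (f.domRestrict U) = span K (Set.range (f ∘ s)) := by
    rw [LinearMap.range_domRestrict, map_span, Set.range_comp]
  have hker : finrank K (LinearMap.ker (f.domRestrict U)) ≤ finrank K (LinearMap.ker f) := by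
    rw [LinearMap.ker_domRestrict, ← finrank_map_subtype_eq, map_comap_subtype]
    exact finrank_mono inf_le_right
  have := (f.domRestrict U).finrank_range_add_finrank_ker
  rw [hrange, finrank_span_eq_card hs] at this
  omega

theorem exists_linearIndependent_map_comp_of_finrank_ker_le [FiniteDimensional K V]
    {n k : ℕ} {s : Fin (n + k) → V} (hs : LinearIndependent K s) (f : V →ₗ[K] W)
    (hf : finrank K (LinearMap.ker f) ≤ k) :
    ∃ g : Fin n → Fin (n + k), LinearIndependent K (f ∘ s ∘ g) :=
  exists_linearIndependent_comp_of_le_finrank_span (v := f ∘ s) <| by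
    have := card_le_finrank_span_range_comp_add_finrank_ker hs f
    rw [Fintype.card_fin] at this
    omega

end LinearAlgebra

theorem orthogonal_starProjection_span_singleton_apply {E : Type*} [NormedAddCommGroup E]
    [InnerProductSpace ℝ E] (v u : E) :
    (ℝ ∙ v)ᗮ.starProjection u = u - (⟪u, v⟫ / ⟪v, v⟫) • v := by
  rw [starProjection_orthogonal_val, starProjection_singleton, real_inner_self_eq_norm_sq,
    real_inner_comm, RCLike.ofReal_real_eq_id, id]

theorem finrank_ker_orthogonal_starProjection_span_singleton {E : Type*} [NormedAddCommGroup E]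
    [InnerProductSpace ℝ E] [FiniteDimensional ℝ E] (v : E) :
    finrank ℝ (LinearMap.ker (ℝ ∙ v)ᗮ.starProjection.toLinearMap) ≤ 1 := by
  rw [ker_starProjection, orthogonal_orthogonal]
  simpa using finrank_span_le_card ({v} : Set E)

theorem succMin_image_le {m m' n k : ℕ} (hn : n ≠ 0)
    (f : EuclideanSpace ℝ (Fin m) →ₗ[ℝ] EuclideanSpace ℝ (Fin m'))
    (hf_norm : ∀ u, ‖f u‖ ≤ ‖u‖) (hf_ker : finrank ℝ (LinearMap.ker f) ≤ k)
    {L : Set (EuclideanSpace ℝ (Fin m))}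
    (hL : ∃ s : Fin (n + k) → EuclideanSpace ℝ (Fin m),
      (∀ j, s j ∈ L) ∧ LinearIndependent ℝ s) :
    succMin (f '' L) n ≤ succMin L (n + k) := by
  apply csInf_le_csInf
  · exact ⟨0, fun r ⟨t, _, _, ht⟩ =>
      (norm_nonneg _).trans (ht ⟨0, Nat.pos_of_ne_zero hn⟩)⟩
  · obtain ⟨s, hsL, hs⟩ := hL
    obtain ⟨r, hr⟩ := Finite.exists_le (fun j => ‖s j‖)
    exact ⟨r, s, hsL, hs, hr⟩
  · rintro r ⟨s, hsL, hs, hsr⟩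
    obtain ⟨g, hg⟩ := exists_linearIndependent_map_comp_of_finrank_ker_le hs f hf_ker
    exact ⟨f ∘ s ∘ g, fun j => ⟨s (g j), hsL _, rfl⟩, hg,
      fun j => (hf_norm _).trans (hsr _)⟩

theorem succMin_projected_lattice_le_general {m n : ℕ} (b : Fin n → EuclideanSpace ℝ (Fin m))
    (hb : LinearIndependent ℝ b)
    (L : Set (EuclideanSpace ℝ (Fin m)))
    (hL : L = (Submodule.span ℤ (Set.range b) : Submodule ℤ (EuclideanSpace ℝ (Fin m))))
    (v : EuclideanSpace ℝ (Fin m)) :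
    ∀ i ∈ Finset.Icc 1 (n - 1),
      succMin ((fun u => u - (⟪u, v⟫ / ⟪v, v⟫) • v) '' L) i ≤ succMin L (i + 1) := by
  intro i hi
  obtain ⟨hi1, hin⟩ := Finset.mem_Icc.mp hi
  have hle : i + 1 ≤ n := by omega
  simp_rw [← orthogonal_starProjection_span_singleton_apply]
  refine succMin_image_le (by omega) (ℝ ∙ v)ᗮ.starProjection.toLinearMap
    (norm_starProjection_apply_le _) (finrank_ker_orthogonal_starProjection_span_singleton v)
    ⟨b ∘ Fin.castLE hle, fun j => ?_, hb.comp _ (Fin.castLE_injective hle)⟩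
  rw [hL]
  exact subset_span ⟨_, rfl⟩

theorem succMin_projected_lattice_le {m n : ℕ} (b : Fin n → EuclideanSpace ℝ (Fin m))
    (hb : LinearIndependent ℝ b)
    (L : Set (EuclideanSpace ℝ (Fin m)))
    (hL : L = (Submodule.span ℤ (Set.range b) : Submodule ℤ (EuclideanSpace ℝ (Fin m))))
    (v : EuclideanSpace ℝ (Fin m)) (hvL : v ∈ L) (hv : v ≠ 0) :
    ∀ i ∈ Finset.Icc 1 (n - 1),
      succMin ((fun u => u - (⟪u, v⟫ / ⟪v, v⟫) • v) '' L) i ≤ succMin L (i + 1) :=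
  succMin_projected_lattice_le_general b hb L hL v
end

section
/- Let Λ ⊆ R^m be a lattice and v ∈ Λ nonzero. For any vector w in the projected lattice Λ_⊥v, there exists a lattice vector x ∈ Λ whose projection orthogonal to v equals w and whose component along v has norm at most ‖v‖/2; consequently ‖x‖² ≤ ‖w‖² + ‖v‖²/4. -/
/-! Round the coefficient `c = ⟪u, v⟫ / ⟪v, v⟫` of any lift `u` of `w` to an integer `k`. Then
`x = u - k • v` still lies in the lattice and projects to `w`, and its component along `v` is
`(c - k) • v` with `|c - k| ≤ 1/2`; since that component is orthogonal to `w`, Pythagoras bounds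
`‖x‖²`. -/

open scoped RealInnerProductSpace

section ProjectionAlong

variable {E : Type*} [NormedAddCommGroup E] [InnerProductSpace ℝ E]

theorem inner_sub_smul_inner_div_self (u v : E) : ⟪u - (⟪u, v⟫ / ⟪v, v⟫) • v, v⟫ = 0 := by
  rcases eq_or_ne v 0 with rfl | hv
  · simp
  · rw [inner_sub_left, real_inner_smul_left, div_mul_cancel₀ _ (inner_self_ne_zero.mpr hv),
      sub_self]

theorem sub_smul_sub_smul_inner_div_self (u v : E) (t : ℝ) :
    (u - t • v) - (⟪u - t • v, v⟫ / ⟪v, v⟫) • v = u - (⟪u, v⟫ / ⟪v, v⟫) • v := by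
  rcases eq_or_ne v 0 with rfl | hv
  · simp
  · have hvv : ⟪v, v⟫ ≠ 0 := inner_self_ne_zero.mpr hv
    have hcoeff : ⟪u - t • v, v⟫ / ⟪v, v⟫ = ⟪u, v⟫ / ⟪v, v⟫ - t := by
      rw [inner_sub_left, real_inner_smul_left]
      field_simp
    rw [hcoeff, sub_smul]
    abel

theorem exists_mem_sub_smul_inner_div_self_eq_and_norm_le (L : AddSubgroup E) {u v : E}
    (hu : u ∈ L) (hv : v ∈ L) :
    ∃ x ∈ L, x - (⟪x, v⟫ / ⟪v, v⟫) • v = u - (⟪u, v⟫ / ⟪v, v⟫) • v ∧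
      ‖(⟪x, v⟫ / ⟪v, v⟫) • v‖ ≤ ‖v‖ / 2 ∧
      ‖x‖ ^ 2 ≤ ‖u - (⟪u, v⟫ / ⟪v, v⟫) • v‖ ^ 2 + ‖v‖ ^ 2 / 4 := by
  set c := ⟪u, v⟫ / ⟪v, v⟫
  set w := u - c • v
  set x := u - (round c : ℝ) • v
  have hxL : x ∈ L := by
    rw [show x = u - round c • v from congrArg (u - ·) (Int.cast_smul_eq_zsmul ℝ _ v)]
    exact L.sub_mem hu (L.zsmul_mem hv _)
  have hproj : x - (⟪x, v⟫ / ⟪v, v⟫) • v = w := sub_smul_sub_smul_inner_div_self u v _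
  have hcomp : (⟪x, v⟫ / ⟪v, v⟫) • v = (c - round c) • v := by
    rw [sub_smul]
    linear_combination (norm := module) -hproj
  have hcomp_le : ‖(⟪x, v⟫ / ⟪v, v⟫) • v‖ ≤ ‖v‖ / 2 := by
    rw [hcomp, norm_smul, Real.norm_eq_abs]
    nlinarith [abs_sub_round c, norm_nonneg v]
  have hpyth : ‖x‖ ^ 2 = ‖w‖ ^ 2 + ‖(⟪x, v⟫ / ⟪v, v⟫) • v‖ ^ 2 := by
    have horth : ⟪w, (⟪x, v⟫ / ⟪v, v⟫) • v⟫ = 0 := by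
      rw [real_inner_smul_right, ← hproj, inner_sub_smul_inner_div_self, mul_zero]
    calc ‖x‖ ^ 2 = ‖w + (⟪x, v⟫ / ⟪v, v⟫) • v‖ ^ 2 := by rw [← hproj, sub_add_cancel]
      _ = ‖w‖ ^ 2 + ‖(⟪x, v⟫ / ⟪v, v⟫) • v‖ ^ 2 := by rw [norm_add_sq_real, horth]; ring
  refine ⟨x, hxL, hproj, hcomp_le, ?_⟩
  rw [hpyth]
  nlinarith [norm_nonneg ((⟪x, v⟫ / ⟪v, v⟫) • v), norm_nonneg v]

end ProjectionAlong

theorem lift_from_projected_lattice_general {m n : ℕ} (b : Fin n → EuclideanSpace ℝ (Fin m))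
    (L : Set (EuclideanSpace ℝ (Fin m)))
    (hL : L = (Submodule.span ℤ (Set.range b) : Submodule ℤ (EuclideanSpace ℝ (Fin m))))
    (v : EuclideanSpace ℝ (Fin m)) (hvL : v ∈ L)
    (w : EuclideanSpace ℝ (Fin m))
    (hw : w ∈ (fun u => u - (⟪u, v⟫ / ⟪v, v⟫) • v) '' L) :
    ∃ x ∈ L, x - (⟪x, v⟫ / ⟪v, v⟫) • v = w ∧
      ‖(⟪x, v⟫ / ⟪v, v⟫) • v‖ ≤ ‖v‖ / 2 ∧
      ‖x‖ ^ 2 ≤ ‖w‖ ^ 2 + ‖v‖ ^ 2 / 4 := by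
  obtain ⟨u, huL, rfl⟩ := hw
  subst hL
  exact exists_mem_sub_smul_inner_div_self_eq_and_norm_le
    (Submodule.span ℤ (Set.range b)).toAddSubgroup huL hvL

theorem lift_from_projected_lattice {m n : ℕ} (b : Fin n → EuclideanSpace ℝ (Fin m))
    (hb : LinearIndependent ℝ b)
    (L : Set (EuclideanSpace ℝ (Fin m)))
    (hL : L = (Submodule.span ℤ (Set.range b) : Submodule ℤ (EuclideanSpace ℝ (Fin m))))
    (v : EuclideanSpace ℝ (Fin m)) (hvL : v ∈ L) (hv : v ≠ 0)
    (w : EuclideanSpace ℝ (Fin m))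
    (hw : w ∈ (fun u => u - (⟪u, v⟫ / ⟪v, v⟫) • v) '' L) :
    ∃ x ∈ L, x - (⟪x, v⟫ / ⟪v, v⟫) • v = w ∧
      ‖(⟪x, v⟫ / ⟪v, v⟫) • v‖ ≤ ‖v‖ / 2 ∧
      ‖x‖ ^ 2 ≤ ‖w‖ ^ 2 + ‖v‖ ^ 2 / 4 :=
  lift_from_projected_lattice_general b L hL v hvL w hw
end

section
/- Let Λ ⊆ R^m be a lattice, t ∈ R^m a target, v ∈ Λ a nonzero lattice vector with ‖v‖ ≤ γλ₁(Λ), and suppose d(t,Λ) ≥ λ₁(Λ)/(2γ). Let t' and Λ' be the projections of t and Λ orthogonal to v. If z' ∈ Λ' satisfies ‖z' − t'‖² ≤ (n−1)γ⁴ d(t',Λ')², then there exists z ∈ Λ projecting to z' with ‖z − t‖² ≤ n γ⁴ d(t,Λ)². -/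
/-!
Lift `z'` to any `y ∈ L` and shift it by the integer multiple of `v` that brings it closest to `t`
along `v`. By Pythagoras, `‖z - t‖²` splits into `‖z' - t'‖²` and the error along `v`, which is at
most `‖v‖² / 4`. The first part is controlled by `d(t', L') ≤ d(t, L)`, the projection being
1-Lipschitz; the second by `‖v‖ ≤ γ λ₁ ≤ 2 γ² d(t, L)`.
-/

open scoped RealInnerProductSpace

theorem LipschitzWith.infDist_image_le {α β : Type*} [PseudoMetricSpace α] [PseudoMetricSpace β]
    {f : α → β} (hf : LipschitzWith 1 f) (x : α) (s : Set α) :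
    Metric.infDist (f x) (f '' s) ≤ Metric.infDist x s := by
  rcases s.eq_empty_or_nonempty with rfl | hs
  · simp
  refine (Metric.le_infDist hs).2 fun y hy => ?_
  calc Metric.infDist (f x) (f '' s) ≤ dist (f x) (f y) :=
        Metric.infDist_le_dist_of_mem (Set.mem_image_of_mem f hy)
    _ ≤ dist x y := by simpa using hf.dist_le_mul x y

section OrthogonalToVector

variable {E : Type*} [NormedAddCommGroup E] [InnerProductSpace ℝ E]

theorem starProjection_orthogonal_singleton_apply (v u : E) :
    (ℝ ∙ v)ᗮ.starProjection u = u - (⟪u, v⟫ / ⟪v, v⟫) • v := by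
  rw [Submodule.starProjection_orthogonal_val, Submodule.starProjection_singleton,
    real_inner_comm, real_inner_self_eq_norm_sq, RCLike.ofReal_real_eq_id, id]

theorem starProjection_orthogonal_singleton_add_smul (v u : E) (c : ℝ) :
    (ℝ ∙ v)ᗮ.starProjection (u + c • v) = (ℝ ∙ v)ᗮ.starProjection u := by
  rw [map_add, map_smul, Submodule.starProjection_orthogonalComplement_singleton_eq_zero,
    smul_zero, add_zero]

theorem exists_int_norm_add_smul_sq_le (v x : E) :
    ∃ k : ℤ, ‖x + (k : ℝ) • v‖ ^ 2 ≤ ‖(ℝ ∙ v)ᗮ.starProjection x‖ ^ 2 + ‖v‖ ^ 2 / 4 := by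
  set c : ℝ := ⟪v, x⟫ / ‖v‖ ^ 2
  -- `c` is the coordinate of `x` along `v`; adding `round (-c)` leaves at most half a step.
  refine ⟨round (-c), ?_⟩
  have hround : |c + round (-c)| ≤ 1 / 2 := by
    have := abs_sub_round (-c)
    rwa [abs_sub_comm, sub_neg_eq_add, add_comm] at this
  have hline : (ℝ ∙ v).starProjection (x + (round (-c) : ℝ) • v)
      = (c + round (-c)) • v := by
    rw [map_add, map_smul, Submodule.starProjection_singleton,
      Submodule.starProjection_eq_self_iff.2 (Submodule.mem_span_singleton_self v), add_smul]
    rfl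
  rw [Submodule.norm_sq_eq_add_norm_sq_starProjection (x + (round (-c) : ℝ) • v) (ℝ ∙ v),
    hline, starProjection_orthogonal_singleton_add_smul, norm_smul, Real.norm_eq_abs]
  have : |c + round (-c)| ^ 2 ≤ (1 / 2) ^ 2 := pow_le_pow_left₀ (abs_nonneg _) hround 2
  nlinarith [sq_nonneg ‖v‖]

end OrthogonalToVector

theorem recursion_step_cvp_general {m n : ℕ} (b : Fin n → EuclideanSpace ℝ (Fin m))
    (L : Set (EuclideanSpace ℝ (Fin m)))
    (hL : L = (Submodule.span ℤ (Set.range b) : Submodule ℤ (EuclideanSpace ℝ (Fin m))))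
    (γ : ℝ) (hγ : 1 ≤ γ)
    (t : EuclideanSpace ℝ (Fin m))
    (v : EuclideanSpace ℝ (Fin m)) (hvL : v ∈ L) (hv : v ≠ 0)
    (hvshort : ‖v‖ ≤ γ * sInf {r : ℝ | ∃ u ∈ L, u ≠ 0 ∧ ‖u‖ = r})
    (hfar : sInf {r : ℝ | ∃ u ∈ L, u ≠ 0 ∧ ‖u‖ = r} / (2 * γ) ≤ Metric.infDist t L)
    (z' : EuclideanSpace ℝ (Fin m))
    (hz'mem : z' ∈ (fun u => u - (⟪u, v⟫ / ⟪v, v⟫) • v) '' L)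
    (hz' : ‖z' - (t - (⟪t, v⟫ / ⟪v, v⟫) • v)‖ ^ 2 ≤
      (n - 1 : ℝ) * γ ^ 4 *
        Metric.infDist (t - (⟪t, v⟫ / ⟪v, v⟫) • v)
          ((fun u => u - (⟪u, v⟫ / ⟪v, v⟫) • v) '' L) ^ 2) :
    ∃ z ∈ L, z - (⟪z, v⟫ / ⟪v, v⟫) • v = z' ∧
      ‖z - t‖ ^ 2 ≤ (n : ℝ) * γ ^ 4 * Metric.infDist t L ^ 2 := by
  set P := (ℝ ∙ v)ᗮ.starProjection
  simp only [← starProjection_orthogonal_singleton_apply] at hz'mem hz' ⊢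
  obtain ⟨y, hyL, rfl⟩ := hz'mem
  obtain ⟨k, hk⟩ := exists_int_norm_add_smul_sq_le v (y - t)
  set d := Metric.infDist t L
  have hn : (0 : ℝ) ≤ n - 1 := by
    rcases n with _ | n
    · subst hL
      simp [hv] at hvL
    · simp
  have hv_le : ‖v‖ ≤ 2 * γ ^ 2 * d := by
    have := (div_le_iff₀ (by positivity)).1 hfar
    nlinarith
  have hd' : Metric.infDist (P t) (P '' L) ≤ d :=
    (Submodule.lipschitzWith_starProjection _).infDist_image_le t L
  refine ⟨y + (k : ℝ) • v, ?_, starProjection_orthogonal_singleton_add_smul v y k, ?_⟩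
  · subst hL
    exact Submodule.add_mem _ hyL (Int.cast_smul_eq_zsmul ℝ k v ▸ Submodule.smul_mem _ k hvL)
  calc ‖y + (k : ℝ) • v - t‖ ^ 2 = ‖y - t + (k : ℝ) • v‖ ^ 2 := by rw [sub_add_eq_add_sub]
    _ ≤ ‖P y - P t‖ ^ 2 + ‖v‖ ^ 2 / 4 := by rwa [← map_sub]
    _ ≤ (n - 1) * γ ^ 4 * d ^ 2 + (2 * γ ^ 2 * d) ^ 2 / 4 := by
      gcongr
      exact hz'.trans (by gcongr; exact Metric.infDist_nonneg)
    _ = n * γ ^ 4 * d ^ 2 := by ring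

theorem recursion_step_cvp {m n : ℕ} (b : Fin n → EuclideanSpace ℝ (Fin m))
    (hb : LinearIndependent ℝ b)
    (L : Set (EuclideanSpace ℝ (Fin m)))
    (hL : L = (Submodule.span ℤ (Set.range b) : Submodule ℤ (EuclideanSpace ℝ (Fin m))))
    (γ : ℝ) (hγ : 1 ≤ γ)
    (t : EuclideanSpace ℝ (Fin m))
    (v : EuclideanSpace ℝ (Fin m)) (hvL : v ∈ L) (hv : v ≠ 0)
    (hvshort : ‖v‖ ≤ γ * sInf {r : ℝ | ∃ u ∈ L, u ≠ 0 ∧ ‖u‖ = r})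
    (hfar : sInf {r : ℝ | ∃ u ∈ L, u ≠ 0 ∧ ‖u‖ = r} / (2 * γ) ≤ Metric.infDist t L)
    (z' : EuclideanSpace ℝ (Fin m))
    (hz'mem : z' ∈ (fun u => u - (⟪u, v⟫ / ⟪v, v⟫) • v) '' L)
    (hz' : ‖z' - (t - (⟪t, v⟫ / ⟪v, v⟫) • v)‖ ^ 2 ≤
      (n - 1 : ℝ) * γ ^ 4 *
        Metric.infDist (t - (⟪t, v⟫ / ⟪v, v⟫) • v)
          ((fun u => u - (⟪u, v⟫ / ⟪v, v⟫) • v) '' L) ^ 2) :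
    ∃ z ∈ L, z - (⟪z, v⟫ / ⟪v, v⟫) • v = z' ∧
      ‖z - t‖ ^ 2 ≤ (n : ℝ) * γ ^ 4 * Metric.infDist t L ^ 2 :=
  recursion_step_cvp_general b L hL γ hγ t v hvL hv hvshort hfar z' hz'mem hz'
end

section
/- Let Λ ⊆ R^m be a lattice, t ∈ R^m, γ ≥ 1, and α = d(t,Λ) with 0 < α ≤ λ₁(Λ)/(2γ). Let t† ∈ Λ be a closest lattice vector to t. In R^{m+1}, consider the lattice Λ̃ generated by the vectors (b,0) for b in a basis of Λ together with (t,α). Then the vector ṽ = (t† − t, −α) ∈ Λ̃ has norm √2·α, and every vector of Λ̃ that is not an integer multiple of ṽ has norm at least √2·γ·α; i.e., ṽ is a γ-unique shortest vector of Λ̃. -/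
/-!
For `p = (u - a t, -a α) ∈ Λ̃` with `p ≠ a ṽ`, the lattice vector `u - a t†` is nonzero, so
`2γα ≤ λ₁(Λ) ≤ ‖u - a t†‖ ≤ ‖u - a t‖ + |a| α` by the triangle inequality through `a t`.
Since `‖x‖ + |y| ≤ √2 ‖(x, y)‖` in the `ℓ²` product, `‖p‖ ≥ √2 γ α`.
-/

open WithLp

lemma norm_fst_add_norm_snd_le_sqrt_two_mul_norm {E F : Type*} [SeminormedAddCommGroup E]
    [SeminormedAddCommGroup F] (x : WithLp 2 (E × F)) :
    ‖x.fst‖ + ‖x.snd‖ ≤ √2 * ‖x‖ := by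
  rw [prod_norm_eq_of_L2, ← Real.sqrt_mul zero_le_two]
  exact Real.le_sqrt_of_sq_le add_sq_le

lemma le_norm_of_le_sInf_norm {E : Type*} [SeminormedAddGroup E] {L : Set E} {c : ℝ}
    (hc : c ≤ sInf {r : ℝ | ∃ u ∈ L, u ≠ 0 ∧ ‖u‖ = r}) {w : E} (hw : w ∈ L) (hw0 : w ≠ 0) :
    c ≤ ‖w‖ :=
  hc.trans <| csInf_le ⟨0, by rintro _ ⟨u, -, -, rfl⟩; exact norm_nonneg u⟩ ⟨w, hw, hw0, rfl⟩

lemma le_norm_sub_add_norm_mul_of_ne_zsmul {E : Type*} [NormedAddCommGroup E] [NormedSpace ℝ E]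
    {L : AddSubgroup E} {c : ℝ} (hmin : ∀ w ∈ L, w ≠ 0 → c ≤ ‖w‖) {t tc u : E}
    (htcL : tc ∈ L) (hu : u ∈ L) {a : ℤ} (hne : u ≠ a • tc) :
    c ≤ ‖u - (a : ℝ) • t‖ + ‖(a : ℝ)‖ * ‖tc - t‖ := calc
  c ≤ ‖u - a • tc‖ := hmin _ (sub_mem hu (zsmul_mem htcL a)) (sub_ne_zero.mpr hne)
  _ = ‖(u - (a : ℝ) • t) - (a : ℝ) • (tc - t)‖ := by
    rw [smul_sub, sub_sub_sub_cancel_right, Int.cast_smul_eq_zsmul]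
  _ ≤ ‖u - (a : ℝ) • t‖ + ‖(a : ℝ)‖ * ‖tc - t‖ := (norm_sub_le _ _).trans_eq (by rw [norm_smul])

theorem bdd_embedding_unique_shortest_general {m n : ℕ} (b : Fin n → EuclideanSpace ℝ (Fin m))
    (L : Set (EuclideanSpace ℝ (Fin m)))
    (hL : L = (Submodule.span ℤ (Set.range b) : Submodule ℤ (EuclideanSpace ℝ (Fin m))))
    (γ α : ℝ) (hγ : 1 ≤ γ)
    (t : EuclideanSpace ℝ (Fin m))
    (hαpos : 0 < α)
    (hbdd : α ≤ sInf {r : ℝ | ∃ u ∈ L, u ≠ 0 ∧ ‖u‖ = r} / (2 * γ))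
    (tc : EuclideanSpace ℝ (Fin m)) (htcL : tc ∈ L) (htc : ‖tc - t‖ = α)
    (Ltilde : Set (WithLp 2 (EuclideanSpace ℝ (Fin m) × ℝ)))
    (hLtilde : Ltilde = {p | ∃ u ∈ L, ∃ a : ℤ,
      p = (WithLp.equiv 2 (EuclideanSpace ℝ (Fin m) × ℝ)).symm (u - (a : ℝ) • t, -(a : ℝ) * α)})
    (vt : WithLp 2 (EuclideanSpace ℝ (Fin m) × ℝ))
    (hvt : vt = (WithLp.equiv 2 (EuclideanSpace ℝ (Fin m) × ℝ)).symm (tc - t, -α)) :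
    ‖vt‖ = Real.sqrt 2 * α ∧
      ∀ p ∈ Ltilde, (∀ k : ℤ, p ≠ k • vt) → Real.sqrt 2 * γ * α ≤ ‖p‖ := by
  subst hL hLtilde hvt
  have hmin : ∀ w ∈ (Submodule.span ℤ (Set.range b)).toAddSubgroup, w ≠ 0 → 2 * γ * α ≤ ‖w‖ :=
    fun w ↦ le_norm_of_le_sInf_norm <| by rwa [le_div_iff₀' (by positivity)] at hbdd
  refine ⟨?_, ?_⟩
  · rw [prod_norm_eq_of_L2]
    simp [htc, abs_of_pos hαpos, ← two_mul, Real.sqrt_mul zero_le_two, Real.sqrt_sq hαpos.le]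
  · rintro _ ⟨u, hu, a, rfl⟩ hk
    have hne : u ≠ a • tc := by
      rintro rfl
      refine hk a ?_
      simp [← Int.cast_smul_eq_zsmul ℝ, ← toLp_smul, smul_sub]
    have hsum := le_norm_sub_add_norm_mul_of_ne_zsmul (t := t) hmin htcL hu hne
    have hsnd : ‖(a : ℝ)‖ * ‖tc - t‖ = ‖-(a : ℝ) * α‖ := by
      rw [norm_mul, norm_neg, htc, Real.norm_of_nonneg hαpos.le]
    refine le_of_mul_le_mul_left ?_ (by positivity : (0 : ℝ) < √2)
    calc √2 * (√2 * γ * α) = 2 * γ * α := by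
          rw [← mul_assoc, ← mul_assoc, Real.mul_self_sqrt zero_le_two]
      _ ≤ ‖u - (a : ℝ) • t‖ + ‖-(a : ℝ) * α‖ := hsnd ▸ hsum
      _ ≤ √2 * ‖_‖ := norm_fst_add_norm_snd_le_sqrt_two_mul_norm (toLp 2 (_, _))

theorem bdd_embedding_unique_shortest {m n : ℕ} (b : Fin n → EuclideanSpace ℝ (Fin m))
    (hb : LinearIndependent ℝ b)
    (L : Set (EuclideanSpace ℝ (Fin m)))
    (hL : L = (Submodule.span ℤ (Set.range b) : Submodule ℤ (EuclideanSpace ℝ (Fin m))))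
    (γ α : ℝ) (hγ : 1 ≤ γ)
    (t : EuclideanSpace ℝ (Fin m))
    (hα : α = Metric.infDist t L) (hαpos : 0 < α)
    (hbdd : α ≤ sInf {r : ℝ | ∃ u ∈ L, u ≠ 0 ∧ ‖u‖ = r} / (2 * γ))
    (tc : EuclideanSpace ℝ (Fin m)) (htcL : tc ∈ L) (htc : ‖tc - t‖ = α)
    (Ltilde : Set (WithLp 2 (EuclideanSpace ℝ (Fin m) × ℝ)))
    (hLtilde : Ltilde = {p | ∃ u ∈ L, ∃ a : ℤ,
      p = (WithLp.equiv 2 (EuclideanSpace ℝ (Fin m) × ℝ)).symm (u - (a : ℝ) • t, -(a : ℝ) * α)})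
    (vt : WithLp 2 (EuclideanSpace ℝ (Fin m) × ℝ))
    (hvt : vt = (WithLp.equiv 2 (EuclideanSpace ℝ (Fin m) × ℝ)).symm (tc - t, -α)) :
    ‖vt‖ = Real.sqrt 2 * α ∧
      ∀ p ∈ Ltilde, (∀ k : ℤ, p ≠ k • vt) → Real.sqrt 2 * γ * α ≤ ‖p‖ :=
  bdd_embedding_unique_shortest_general b L hL γ α hγ t hαpos hbdd tc htcL htc Ltilde hLtilde vt hvt
end

section
/- Let Λ ⊆ R^m be a lattice, t ∈ R^m with α = d(t,Λ) ≤ λ₁(Λ)/(2γ) for some γ ≥ 1, and t† a closest lattice vector to t. If u ∈ Λ, a ∈ Z, and ‖(u − a·t, −a·α)‖ < √2·γ·α in R^{m+1}, then u − a·t† satisfies ‖u − a·t†‖ < λ₁(Λ), hence u = a·t†. -/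
/-! Put `w := u - a • t† = (u - a • t) + a • (t - t†)`. By the triangle inequality and Cauchy–Schwarz
in `ℝ²`, `‖w‖ ≤ ‖u - a • t‖ + |a| α ≤ √2 ‖(u - a • t, -a α)‖ < 2 γ α ≤ λ₁(Λ)`, and `w` is a lattice
vector, so it is `0`. -/

theorem WithLp.norm_fst_add_norm_snd_le_sqrt_two_mul {E F : Type*} [SeminormedAddCommGroup E]
    [SeminormedAddCommGroup F] (p : WithLp 2 (E × F)) :
    ‖p.fst‖ + ‖p.snd‖ ≤ √2 * ‖p‖ := by
  have hsq : (‖p.fst‖ + ‖p.snd‖) ^ 2 ≤ (√2 * ‖p‖) ^ 2 := by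
    rw [mul_pow, Real.sq_sqrt zero_le_two, WithLp.prod_norm_sq_eq_of_L2]
    nlinarith [sq_nonneg (‖p.fst‖ - ‖p.snd‖)]
  exact le_of_pow_le_pow_left₀ two_ne_zero (by positivity) hsq

theorem eq_zero_of_norm_lt_sInf_norm_ne_zero {E : Type*} [SeminormedAddCommGroup E] {L : Set E}
    {w : E} (hw : w ∈ L) (hlt : ‖w‖ < sInf {r : ℝ | ∃ v ∈ L, v ≠ 0 ∧ ‖v‖ = r}) : w = 0 := by
  by_contra hne
  have hbdd : BddBelow {r : ℝ | ∃ v ∈ L, v ≠ 0 ∧ ‖v‖ = r} :=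
    ⟨0, fun _ ⟨v, _, _, hv⟩ => hv ▸ norm_nonneg v⟩
  exact (csInf_le hbdd ⟨w, hw, hne, rfl⟩).not_gt hlt

theorem norm_sub_smul_le_norm_sub_smul_add {E : Type*} [SeminormedAddCommGroup E]
    [NormedSpace ℝ E] (u t t' : E) (a : ℝ) :
    ‖u - a • t'‖ ≤ ‖u - a • t‖ + |a| * ‖t' - t‖ := by
  calc ‖u - a • t'‖ = ‖(u - a • t) + a • (t - t')‖ := by rw [smul_sub, sub_add_sub_cancel]
    _ ≤ ‖u - a • t‖ + ‖a • (t - t')‖ := norm_add_le _ _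
    _ = ‖u - a • t‖ + |a| * ‖t' - t‖ := by rw [norm_smul, Real.norm_eq_abs, norm_sub_rev t t']

theorem short_lifted_vector_is_multiple_general {m n : ℕ} (b : Fin n → EuclideanSpace ℝ (Fin m))
    (L : Set (EuclideanSpace ℝ (Fin m)))
    (hL : L = (Submodule.span ℤ (Set.range b) : Submodule ℤ (EuclideanSpace ℝ (Fin m))))
    (γ α : ℝ)
    (t : EuclideanSpace ℝ (Fin m))
    (hbdd : α ≤ sInf {r : ℝ | ∃ u ∈ L, u ≠ 0 ∧ ‖u‖ = r} / (2 * γ))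
    (tc : EuclideanSpace ℝ (Fin m)) (htcL : tc ∈ L) (htc : ‖tc - t‖ = α)
    (u : EuclideanSpace ℝ (Fin m)) (huL : u ∈ L) (a : ℤ)
    (hshort : ‖(WithLp.equiv 2 (EuclideanSpace ℝ (Fin m) × ℝ)).symm
        (u - (a : ℝ) • t, -(a : ℝ) * α)‖ < Real.sqrt 2 * γ * α) :
    ‖u - (a : ℝ) • tc‖ < sInf {r : ℝ | ∃ w ∈ L, w ≠ 0 ∧ ‖w‖ = r} ∧
      u = (a : ℝ) • tc := by
  set p := (WithLp.equiv 2 (EuclideanSpace ℝ (Fin m) × ℝ)).symm (u - (a : ℝ) • t, -(a : ℝ) * α)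
  have hα : 0 ≤ α := htc ▸ norm_nonneg _
  have hγ : 0 < γ := by
    have : 0 < √2 * α * γ := by linarith [norm_nonneg p, mul_right_comm √2 γ α]
    exact pos_of_mul_pos_right this (by positivity)
  have hlt : ‖u - (a : ℝ) • tc‖ < sInf {r : ℝ | ∃ w ∈ L, w ≠ 0 ∧ ‖w‖ = r} :=
    calc ‖u - (a : ℝ) • tc‖ ≤ ‖u - (a : ℝ) • t‖ + |(a : ℝ)| * α :=
          htc ▸ norm_sub_smul_le_norm_sub_smul_add u t tc a
      _ = ‖p.fst‖ + ‖p.snd‖ := by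
          simp [p, abs_of_nonneg hα]
      _ ≤ √2 * ‖p‖ := WithLp.norm_fst_add_norm_snd_le_sqrt_two_mul p
      _ < √2 * (√2 * γ * α) := by gcongr
      _ = 2 * γ * α := by rw [← mul_assoc, ← mul_assoc, Real.mul_self_sqrt zero_le_two]
      _ ≤ _ := by rwa [le_div_iff₀ (by positivity), mul_comm] at hbdd
  have hmem : u - (a : ℝ) • tc ∈ L := by
    subst hL
    rw [Int.cast_smul_eq_zsmul]
    exact sub_mem huL (zsmul_mem htcL a)
  exact ⟨hlt, sub_eq_zero.mp (eq_zero_of_norm_lt_sInf_norm_ne_zero hmem hlt)⟩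

theorem short_lifted_vector_is_multiple {m n : ℕ} (b : Fin n → EuclideanSpace ℝ (Fin m))
    (hb : LinearIndependent ℝ b)
    (L : Set (EuclideanSpace ℝ (Fin m)))
    (hL : L = (Submodule.span ℤ (Set.range b) : Submodule ℤ (EuclideanSpace ℝ (Fin m))))
    (γ α : ℝ) (hγ : 1 ≤ γ)
    (t : EuclideanSpace ℝ (Fin m))
    (hα : α = Metric.infDist t L)
    (hbdd : α ≤ sInf {r : ℝ | ∃ u ∈ L, u ≠ 0 ∧ ‖u‖ = r} / (2 * γ))
    (tc : EuclideanSpace ℝ (Fin m)) (htcL : tc ∈ L) (htc : ‖tc - t‖ = α)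
    (u : EuclideanSpace ℝ (Fin m)) (huL : u ∈ L) (a : ℤ)
    (hshort : ‖(WithLp.equiv 2 (EuclideanSpace ℝ (Fin m) × ℝ)).symm
        (u - (a : ℝ) • t, -(a : ℝ) * α)‖ < Real.sqrt 2 * γ * α) :
    ‖u - (a : ℝ) • tc‖ < sInf {r : ℝ | ∃ w ∈ L, w ≠ 0 ∧ ‖w‖ = r} ∧
      u = (a : ℝ) • tc :=
  short_lifted_vector_is_multiple_general b L hL γ α t hbdd tc htcL htc u huL a hshort
end

section
/- Let Λ ⊆ R^m be a lattice of rank n and for each i let v_i be a vector in the projected lattice obtained by successively projecting orthogonal to v₁,…,v_{i−1}, with ‖v_i‖ ≤ γ·λ₁ of that projected lattice. Then ‖v_i‖ ≤ γ·λ_n(Λ) for all i, and any vector x_i ∈ Λ obtained by lifting v_i (adding at each stage at most half of the projecting vector) satisfies ‖x_i‖² ≤ n·γ²·λ_n(Λ)². -/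
open scoped RealInnerProductSpace

set_option maxHeartbeats 1000000

noncomputable def projStep {m : ℕ} (v : EuclideanSpace ℝ (Fin m)) :
    EuclideanSpace ℝ (Fin m) →ₗ[ℝ] EuclideanSpace ℝ (Fin m) :=
  LinearMap.id - (⟪v, v⟫)⁻¹ • (LinearMap.smulRight ((innerSL ℝ v) : EuclideanSpace ℝ (Fin m) →ₗ[ℝ] ℝ) v)

lemma projStep_apply {m : ℕ} (v u : EuclideanSpace ℝ (Fin m)) :
    projStep v u = u - (⟪u, v⟫ / ⟪v, v⟫) • v := by
  have : projStep v u = u - ⟪v, v⟫⁻¹ • (⟪v, u⟫ • v) := rfl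
  rw [this, real_inner_comm v u, div_eq_inv_mul, mul_smul]

lemma projStep_inner {m : ℕ} (v u : EuclideanSpace ℝ (Fin m)) (hv : v ≠ 0) :
    ⟪projStep v u, v⟫ = 0 := by
  rw [projStep_apply, inner_sub_left, real_inner_smul_left]
  have h : ⟪v, v⟫ ≠ (0:ℝ) := fun h => hv (inner_self_eq_zero.mp h)
  rw [div_mul_cancel₀ _ h, sub_self]

lemma projStep_norm {m : ℕ} (v u : EuclideanSpace ℝ (Fin m)) (hv : v ≠ 0) :
    ‖projStep v u‖ ≤ ‖u‖ := by
  have hu : u = projStep v u + (⟪u, v⟫ / ⟪v, v⟫) • v := by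
    rw [projStep_apply]; abel
  have h2 : ‖u‖ ^ 2 = ‖projStep v u‖ ^ 2 + ‖(⟪u, v⟫ / ⟪v, v⟫) • v‖ ^ 2 := by
    nth_rewrite 1 [hu]
    rw [norm_add_sq_real, real_inner_smul_right, projStep_inner v u hv]
    ring
  nlinarith [norm_nonneg (projStep v u), norm_nonneg u, sq_nonneg ‖(⟪u, v⟫ / ⟪v, v⟫) • v‖]

noncomputable def projComp {m n : ℕ} (v : Fin n → EuclideanSpace ℝ (Fin m)) :
    ℕ → (EuclideanSpace ℝ (Fin m) →ₗ[ℝ] EuclideanSpace ℝ (Fin m))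
  | 0 => LinearMap.id
  | (k+1) => if h : k < n then (projStep (v ⟨k, h⟩)).comp (projComp v k) else projComp v k

lemma projComp_succ {m n : ℕ} (v : Fin n → EuclideanSpace ℝ (Fin m)) (k : ℕ) (h : k < n)
    (w : EuclideanSpace ℝ (Fin m)) :
    projComp v (k+1) w = projStep (v ⟨k, h⟩) (projComp v k w) := by
  simp [projComp, h]

lemma projComp_norm {m n : ℕ} (v : Fin n → EuclideanSpace ℝ (Fin m))
    (hv0 : ∀ i, v i ≠ 0) (k : ℕ) (w : EuclideanSpace ℝ (Fin m)) :
    ‖projComp v k w‖ ≤ ‖w‖ := by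
  induction k with
  | zero => simp [projComp]
  | succ k ih =>
    by_cases h : k < n
    · rw [projComp_succ v k h]
      exact le_trans (projStep_norm _ _ (hv0 _)) ih
    · simpa [projComp, h] using ih

lemma projComp_span {m n : ℕ} (v : Fin n → EuclideanSpace ℝ (Fin m)) (k : ℕ)
    (w : EuclideanSpace ℝ (Fin m)) :
    w - projComp v k w ∈ Submodule.span ℝ (v '' {j : Fin n | (j : ℕ) < k}) := by
  induction k with
  | zero => simp [projComp]
  | succ k ih =>
    have hmono : Submodule.span ℝ (v '' {j : Fin n | (j : ℕ) < k}) ≤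
        Submodule.span ℝ (v '' {j : Fin n | (j : ℕ) < k + 1}) := by
      apply Submodule.span_mono
      exact Set.image_mono fun j hj => Nat.lt_succ_of_lt hj
    by_cases h : k < n
    · rw [projComp_succ v k h, projStep_apply]
      have heq : w - (projComp v k w -
          (⟪projComp v k w, v ⟨k, h⟩⟫ / ⟪v ⟨k, h⟩, v ⟨k, h⟩⟫) • v ⟨k, h⟩) =
          (w - projComp v k w) +
          (⟪projComp v k w, v ⟨k, h⟩⟫ / ⟪v ⟨k, h⟩, v ⟨k, h⟩⟫) • v ⟨k, h⟩ := by abel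
      rw [heq]
      refine Submodule.add_mem _ (hmono ih) (Submodule.smul_mem _ _ (Submodule.subset_span ?_))
      exact ⟨⟨k, h⟩, by simp, rfl⟩
    · have : projComp v (k+1) w = projComp v k w := by simp [projComp, h]
      rw [this]; exact hmono ih

lemma projComp_mem {m n : ℕ} (v : Fin n → EuclideanSpace ℝ (Fin m))
    (L : ℕ → Set (EuclideanSpace ℝ (Fin m)))
    (hLsucc : ∀ i : Fin n,
      L (i + 1) = (fun u => u - (⟪u, v i⟫ / ⟪v i, v i⟫) • v i) '' L i)
    (k : ℕ) (hk : k ≤ n) (w : EuclideanSpace ℝ (Fin m)) (hw : w ∈ L 0) :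
    projComp v k w ∈ L k := by
  induction k with
  | zero => simpa [projComp]
  | succ k ih =>
    have h : k < n := hk
    rw [projComp_succ v k h]
    have heq := hLsucc ⟨k, h⟩
    simp only [Fin.val_mk] at heq
    rw [heq]
    exact ⟨projComp v k w, ih (le_of_lt h), (projStep_apply _ _).symm⟩

set_option maxHeartbeats 1000000

theorem norms_of_successive_short_vectors_and_lifts {m n : ℕ}
    (b : Fin n → EuclideanSpace ℝ (Fin m)) (hb : LinearIndependent ℝ b)
    (Λ : Set (EuclideanSpace ℝ (Fin m)))
    (hΛ : Λ = (Submodule.span ℤ (Set.range b) : Submodule ℤ (EuclideanSpace ℝ (Fin m))))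
    (γ : ℝ) (hγ : 1 ≤ γ)
    -- `L i` is the lattice obtained after successively projecting orthogonally to
    -- `v 0, …, v (i-1)`, starting from `L 0 = Λ`.
    (L : ℕ → Set (EuclideanSpace ℝ (Fin m)))
    (hL0 : L 0 = Λ)
    (v : Fin n → EuclideanSpace ℝ (Fin m))
    (hvmem : ∀ i : Fin n, v i ∈ L i) (hv0 : ∀ i : Fin n, v i ≠ 0)
    (hLsucc : ∀ i : Fin n,
      L (i + 1) = (fun u => u - (⟪u, v i⟫ / ⟪v i, v i⟫) • v i) '' L i)
    -- each `v i` is a `γ`-approximate shortest vector of the projected lattice `L i`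
    (hvshort : ∀ i : Fin n, ‖v i‖ ≤ γ * succMin (L i) 1)
    -- each `x i ∈ Λ` is a lift of `v i`, adding at each stage at most half of the
    -- projecting vector
    (x : Fin n → EuclideanSpace ℝ (Fin m))
    (hxmem : ∀ i : Fin n, x i ∈ Λ)
    (hxlift : ∀ i : Fin n, ∃ δ : Fin n → ℝ, (∀ j, |δ j| ≤ 1 / 2) ∧
      x i = v i + ∑ j ∈ Finset.Iio i, δ j • v j) :
    (∀ i : Fin n, ‖v i‖ ≤ γ * succMin Λ n) ∧
      ∀ i : Fin n, ‖x i‖ ^ 2 ≤ (n : ℝ) * γ ^ 2 * succMin Λ n ^ 2 := by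
  classical
  set Sn := {r : ℝ | ∃ s : Fin n → EuclideanSpace ℝ (Fin m),
    (∀ k, s k ∈ Λ) ∧ LinearIndependent ℝ s ∧ ∀ k, ‖s k‖ ≤ r} with hSn_def
  have hSn_ne : Sn.Nonempty := by
    refine ⟨∑ k, ‖b k‖, b, fun k => ?_, hb, fun k => ?_⟩
    · rw [hΛ]; exact Submodule.subset_span (Set.mem_range_self k)
    · exact Finset.single_le_sum (fun j _ => norm_nonneg (b j)) (Finset.mem_univ k)
  -- key comparison of successive minima
  have key : ∀ i : Fin n, succMin (L i) 1 ≤ succMin Λ n := by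
    intro i
    apply csInf_le_csInf
    · exact ⟨0, fun r ⟨s, hs, hli, hr⟩ => le_trans (norm_nonneg (s 0)) (hr 0)⟩
    · exact hSn_ne
    · rintro r ⟨s, hsmem, hsli, hsnorm⟩
      -- find k with nonzero projection
      have hk : ∃ k, projComp v (i : ℕ) (s k) ≠ 0 := by
        by_contra hall
        push_neg at hall
        have hms : ∀ k, s k ∈ Submodule.span ℝ (v '' {j : Fin n | (j : ℕ) < (i : ℕ)}) := by
          intro k
          have := projComp_span v (i : ℕ) (s k)
          rwa [hall k, sub_zero] at this
        have h1 : n ≤ Module.finrank ℝ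
            (Submodule.span ℝ (v '' {j : Fin n | (j : ℕ) < (i : ℕ)})) := by
          have hli' : LinearIndependent ℝ (fun k =>
              (⟨s k, hms k⟩ : Submodule.span ℝ (v '' {j : Fin n | (j : ℕ) < (i : ℕ)}))) :=
            LinearIndependent.of_comp (Submodule.span ℝ
              (v '' {j : Fin n | (j : ℕ) < (i : ℕ)})).subtype (by exact hsli)
          simpa using hli'.fintype_card_le_finrank
        have himg : (v '' {j : Fin n | (j : ℕ) < (i : ℕ)}) = ↑((Finset.Iio i).image v) := by
          rw [Finset.coe_image, Finset.coe_Iio]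
          congr 1
        have h2 : Module.finrank ℝ
            (Submodule.span ℝ (v '' {j : Fin n | (j : ℕ) < (i : ℕ)})) ≤ (i : ℕ) := by
          rw [himg]
          exact le_trans (finrank_span_finset_le_card _)
            (le_trans Finset.card_image_le (by simp))
        have := i.2
        omega
      obtain ⟨k, hk⟩ := hk
      refine ⟨fun _ => projComp v (i : ℕ) (s k), fun _ => ?_, ?_, fun _ => ?_⟩
      · exact projComp_mem v L hLsucc (i : ℕ) i.2.le (s k) (by rw [hL0]; exact hsmem k)
      · exact linearIndependent_unique_iff.mpr hk
      · exact le_trans (projComp_norm v hv0 _ _) (hsnorm k)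
  have part1 : ∀ i : Fin n, ‖v i‖ ≤ γ * succMin Λ n := by
    intro i
    have hγ0 : (0 : ℝ) ≤ γ := by linarith
    exact le_trans (hvshort i) (mul_le_mul_of_nonneg_left (key i) hγ0)
  refine ⟨part1, ?_⟩
  -- orthogonality
  have horthL : ∀ (j : Fin n) (k : ℕ), (j : ℕ) < k → k ≤ n →
      ∀ u ∈ L k, ⟪u, v j⟫ = 0 := by
    intro j k
    induction k with
    | zero => omega
    | succ k ih =>
      intro hjk hkn u hu
      have hk : k < n := hkn
      have heq := hLsucc ⟨k, hk⟩
      simp only [Fin.val_mk] at heq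
      rw [heq] at hu
      obtain ⟨u', hu', rfl⟩ := hu
      beta_reduce
      rcases Nat.lt_succ_iff_lt_or_eq.mp hjk with h | h
      · rw [inner_sub_left, real_inner_smul_left,
          ih h (le_of_lt hk) u' hu', ih h (le_of_lt hk) (v ⟨k, hk⟩) (hvmem ⟨k, hk⟩)]
        ring
      · have hj' : j = (⟨k, hk⟩ : Fin n) := Fin.ext h
        rw [hj', ← projStep_apply]
        exact projStep_inner _ _ (hv0 _)
  have horthv : ∀ j k : Fin n, j < k → ⟪v k, v j⟫ = 0 := by
    intro j k h
    exact horthL j (k : ℕ) h k.2.le (v k) (hvmem k)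
  intro i
  obtain ⟨δ, hδ, hx⟩ := hxlift i
  have hsm0 : 0 ≤ succMin Λ n := by
    apply le_csInf hSn_ne
    rintro r ⟨s, hs, hli, hr⟩
    exact le_trans (norm_nonneg (s ⟨0, i.pos⟩)) (hr ⟨0, i.pos⟩)
  set c := γ * succMin Λ n with hc
  have hc0 : 0 ≤ c := mul_nonneg (by linarith) hsm0
  set S := ∑ j ∈ Finset.Iio i, δ j • v j with hS
  have hviS : ⟪v i, S⟫ = 0 := by
    rw [hS, inner_sum]
    apply Finset.sum_eq_zero
    intro j hj
    rw [real_inner_smul_right, horthv j i (Finset.mem_Iio.mp hj)]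
    ring
  have hSS : ⟪S, S⟫ = ∑ j ∈ Finset.Iio i, δ j ^ 2 * ‖v j‖ ^ 2 := by
    rw [hS, sum_inner]
    apply Finset.sum_congr rfl
    intro j hj
    rw [real_inner_smul_left, inner_sum]
    rw [Finset.sum_eq_single_of_mem j hj]
    · rw [real_inner_smul_right, real_inner_self_eq_norm_sq]; ring
    · intro k hk hkj
      rw [real_inner_smul_right]
      rcases lt_or_gt_of_ne hkj with hlt | hlt
      · rw [horthv k j hlt]; ring
      · rw [real_inner_comm (v k) (v j), horthv j k hlt]; ring
  have hnormx : ‖x i‖ ^ 2 = ‖v i‖ ^ 2 + ∑ j ∈ Finset.Iio i, δ j ^ 2 * ‖v j‖ ^ 2 := by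
    rw [hx, norm_add_sq_real, hviS, ← hSS, real_inner_self_eq_norm_sq]
    ring
  have hterm : ∀ j ∈ Finset.Iio i, δ j ^ 2 * ‖v j‖ ^ 2 ≤ c ^ 2 := by
    intro j _
    have h1 : δ j ^ 2 ≤ 1 := by
      have := hδ j
      nlinarith [abs_nonneg (δ j), sq_abs (δ j)]
    have h2 : ‖v j‖ ^ 2 ≤ c ^ 2 := by
      have := part1 j
      nlinarith [norm_nonneg (v j)]
    nlinarith [sq_nonneg (δ j), sq_nonneg ‖v j‖]
  have hcard : ((Finset.Iio i).card : ℝ) ≤ (n : ℝ) - 1 := by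
    have h1 : (Finset.Iio i).card ≤ n - 1 := by
      have : Finset.Iio i ⊆ Finset.univ.erase i := by
        intro j hj
        exact Finset.mem_erase.mpr ⟨ne_of_lt (Finset.mem_Iio.mp hj), Finset.mem_univ j⟩
      calc (Finset.Iio i).card ≤ (Finset.univ.erase i).card := Finset.card_le_card this
        _ = n - 1 := by rw [Finset.card_erase_of_mem (Finset.mem_univ i)]; simp
    have h2 : 0 < n := i.pos
    have : ((Finset.Iio i).card : ℝ) ≤ ((n - 1 : ℕ) : ℝ) := Nat.cast_le.mpr h1
    rw [Nat.cast_sub h2] at this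
    simpa using this
  have hsum : ∑ j ∈ Finset.Iio i, δ j ^ 2 * ‖v j‖ ^ 2 ≤ ((n : ℝ) - 1) * c ^ 2 := by
    calc ∑ j ∈ Finset.Iio i, δ j ^ 2 * ‖v j‖ ^ 2
        ≤ ∑ _j ∈ Finset.Iio i, c ^ 2 := Finset.sum_le_sum hterm
      _ = ((Finset.Iio i).card : ℝ) * c ^ 2 := by rw [Finset.sum_const, nsmul_eq_mul]
      _ ≤ ((n : ℝ) - 1) * c ^ 2 := by nlinarith [sq_nonneg c]
  have hvi2 : ‖v i‖ ^ 2 ≤ c ^ 2 := by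
    have := part1 i
    nlinarith [norm_nonneg (v i)]
  have : ‖x i‖ ^ 2 ≤ (n : ℝ) * c ^ 2 := by
    rw [hnormx]; nlinarith
  calc ‖x i‖ ^ 2 ≤ (n : ℝ) * c ^ 2 := this
    _ = (n : ℝ) * γ ^ 2 * succMin Λ n ^ 2 := by rw [hc]; ring
end
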